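/- Superposing for delayed trace on streams: for a stateful sequence (i, φ) with φ_n : S_n × (T_n × A) × ... inducing, after delayed trace along T with initial p, a causal function F : A^ℕ → B^ℕ, and any causal function G : C^ℕ → D^ℕ induced by a stateful sequence, the product function (F × G) : (A × C)^ℕ → (B × D)^ℕ, sending a stream of pairs to the pair of streams processed independently, equals the delayed trace along T (with the same initial state p) of the product of the underlying stateful sequences; in particular, the function x ↦ (F (fst ∘ x) paired componentwise with G (snd ∘ x)) is itself induced by a single stateful sequence with states S_n × T_n × U_n, where U are the states of G. -/
import Mathlib


def Causal {A B : Type*} (f : (ℕ → A) → (ℕ → B)) : Prop :=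
  ∀ x y : ℕ → A, ∀ n : ℕ, (∀ i ≤ n, x i = y i) → ∀ i ≤ n, f x i = f y i

def mealyStates {A B T : Type*} (t0 : T) (ρ : T × A → T × B) (x : ℕ → A) : ℕ → T
  | 0 => t0
  | n + 1 => (ρ (mealyStates t0 ρ x n, x n)).1

def mealyInduced {A B T : Type*} (t0 : T) (ρ : T × A → T × B) (x : ℕ → A) (n : ℕ) : B :=
  (ρ (mealyStates t0 ρ x n, x n)).2

def states {A B : Type*} {S : ℕ → Type*} (i : S 0)
    (φ : ∀ n, S n × A → S (n + 1) × B) (x : ℕ → A) : ∀ n, S n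
  | 0 => i
  | n + 1 => (φ n (states i φ x n, x n)).1

def induced {A B : Type*} {S : ℕ → Type*} (i : S 0)
    (φ : ∀ n, S n × A → S (n + 1) × B) (x : ℕ → A) (n : ℕ) : B :=
  (φ n (states i φ x n, x n)).2

/-- Superposing for delayed trace on streams. -/
theorem delayed_trace_superposing {A B C D : Type*} {S T U : ℕ → Type*}
    (i : S 0) (p : T 0) (j : U 0)
    (φ : ∀ n, S n × (T n × A) → S (n + 1) × (T (n + 1) × B))
    (ψ : ∀ n, U n × C → U (n + 1) × D) :
    (fun (x : ℕ → A × C) (n : ℕ) =>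
      (induced (S := fun n => S n × T n) (i, p)
        (fun n (r : (S n × T n) × A) =>
          let out := φ n (r.1.1, (r.1.2, r.2))
          ((out.1, out.2.1), out.2.2)) (fun m => (x m).1) n,
       induced j ψ (fun m => (x m).2) n))
    = induced (S := fun n => (S n × T n) × U n) ((i, p), j)
        (fun n (r : ((S n × T n) × U n) × (A × C)) =>
          let out := φ n (r.1.1.1, (r.1.1.2, r.2.1))
          let out' := ψ n (r.1.2, r.2.2)
          (((out.1, out.2.1), out'.1), (out.2.2, out'.2))) := by
  funext x n
  have key : ∀ m, states (S := fun n => (S n × T n) × U n) ((i, p), j)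
        (fun n (r : ((S n × T n) × U n) × (A × C)) =>
          let out := φ n (r.1.1.1, (r.1.1.2, r.2.1))
          let out' := ψ n (r.1.2, r.2.2)
          (((out.1, out.2.1), out'.1), (out.2.2, out'.2))) x m
      = (states (S := fun n => S n × T n) (i, p)
          (fun n (r : (S n × T n) × A) =>
            let out := φ n (r.1.1, (r.1.2, r.2))
            ((out.1, out.2.1), out.2.2)) (fun m => (x m).1) m,
         states j ψ (fun m => (x m).2) m) := by
    intro m
    induction m with
    | zero => rfl
    | succ k ih => simp [states, ih]
  simp only [induced, key]
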